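/- Partition lemma (PassJoin): let x, y be strings and U a natural number with LD(x,y) ≤ U. Then for any partition of y into U+1 contiguous segments (i.e., y is the concatenation of U+1 strings), at least one segment appears as a contiguous substring of x. -/

import Mathlib

/-! Levenshtein distance was removed from Mathlib; reproduced here from the
older Mathlib `Mathlib/Data/List/EditDistance/Defs.lean`. -/

section LevenshteinCompat

structure Levenshtein.Cost (α β δ : Type*) where
  delete : α → δ
  insert : β → δ
  substitute : α → β → δ

def Levenshtein.defaultCost {α : Type*} [DecidableEq α] : Levenshtein.Cost α α ℕ where
  delete _ := 1
  insert _ := 1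
  substitute a b := if a = b then 0 else 1

def Levenshtein.impl {α β δ : Type*} [AddZeroClass δ] [Min δ] (C : Levenshtein.Cost α β δ)
    (xs : List α) (y : β) (d : {r : List δ // 0 < r.length}) : {r : List δ // 0 < r.length} :=
  let ⟨ds, w⟩ := d
  xs.zip (ds.zip ds.tail) |>.foldr
    (init := ⟨[C.insert y + ds.getLast (List.length_pos_iff.mp w)], by simp⟩)
    (fun ⟨x, d₀, d₁⟩ ⟨r, w⟩ =>
      ⟨min (C.delete x + r[0]) (min (C.insert y + d₀) (C.substitute x y + d₁)) :: r, by simp⟩)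

def suffixLevenshtein {α β δ : Type*} [AddZeroClass δ] [Min δ] (C : Levenshtein.Cost α β δ)
    (xs : List α) (ys : List β) : {r : List δ // 0 < r.length} :=
  ys.foldr
    (Levenshtein.impl C xs)
    (xs.foldr (init := ⟨[0], by simp⟩) (fun a ⟨r, w⟩ => ⟨(C.delete a + r[0]) :: r, by simp⟩))

def levenshtein {α β δ : Type*} [AddZeroClass δ] [Min δ] (C : Levenshtein.Cost α β δ)
    (xs : List α) (ys : List β) : δ :=
  let ⟨r, w⟩ := suffixLevenshtein C xs ys
  r[0]

end LevenshteinCompat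

variable {α : Type*} [Fintype α] [DecidableEq α]

/-- Levenshtein distance: the minimum number of single-character insertions,
deletions, and substitutions transforming one string into another. -/
def LD (x y : List α) : ℕ := levenshtein Levenshtein.defaultCost x y

/-- Normalized Levenshtein distance. -/
noncomputable def NLD (x y : List α) : ℝ :=
  2 * LD x y / (x.length + y.length + LD x y)

/-! Splitting `y = y₁ ++ y₂` splits an optimal alignment of `x` with `y`: there is a split
`x = x₁ ++ x₂` with `LD x₁ y₁ + LD x₂ y₂ ≤ LD x y`, for any edit cost with values in a linearly
ordered additive monoid, by induction along the edit-distance recurrence. Peeling off the `U + 1`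
segments one at a time, the distances between the segments and the corresponding pieces of `x` sum
to at most `U`, so one of them is `0` and that segment is a piece of `x`. -/

namespace Levenshtein

variable {α β δ : Type*} [AddZeroClass δ] [Min δ] (C : Cost α β δ)

theorem impl_cons_val (x : α) (xs : List α) (y : β) {d : δ} {s t : {r : List δ // 0 < r.length}}
    (h : s.1 = d :: t.1) :
    (impl C (x :: xs) y s).1 =
      min (C.delete x + (impl C xs y t).1[0]'(impl C xs y t).2)
        (min (C.insert y + s.1[0]'s.2) (C.substitute x y + t.1[0]'t.2)) :: (impl C xs y t).1 := by
  obtain ⟨_, _⟩ := s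
  obtain ⟨_ | _, ht⟩ := t
  · simp at ht
  · subst h; rfl

theorem exists_suffixLevenshtein_cons_left_val (x : α) (xs : List α) (ys : List β) :
    ∃ d, (suffixLevenshtein C (x :: xs) ys).1 = d :: (suffixLevenshtein C xs ys).1 := by
  induction ys with
  | nil => exact ⟨_, rfl⟩
  | cons y ys ih => exact ⟨_, impl_cons_val C x xs y ih.choose_spec⟩

theorem suffixLevenshtein_nil_left_val (ys : List β) :
    (suffixLevenshtein C ([] : List α) ys).1 = [levenshtein C ([] : List α) ys] := by
  cases ys <;> rfl

end Levenshtein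

open Levenshtein

section
variable {α β δ : Type*} [AddZeroClass δ] [Min δ] (C : Cost α β δ)

@[simp] theorem levenshtein_nil_nil : levenshtein C ([] : List α) ([] : List β) = 0 := rfl

@[simp] theorem levenshtein_nil_cons (y : β) (ys : List β) :
    levenshtein C ([] : List α) (y :: ys) = C.insert y + levenshtein C ([] : List α) ys := by
  show C.insert y + (suffixLevenshtein C [] ys).1.getLast _ = _
  simp [suffixLevenshtein_nil_left_val]

@[simp] theorem levenshtein_cons_nil (x : α) (xs : List α) :
    levenshtein C (x :: xs) ([] : List β) = C.delete x + levenshtein C xs ([] : List β) := rfl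

theorem levenshtein_cons_cons (x : α) (xs : List α) (y : β) (ys : List β) :
    levenshtein C (x :: xs) (y :: ys) =
      min (C.delete x + levenshtein C xs (y :: ys))
        (min (C.insert y + levenshtein C (x :: xs) ys)
          (C.substitute x y + levenshtein C xs ys)) := by
  obtain ⟨_, h⟩ := exists_suffixLevenshtein_cons_left_val C x xs ys
  show (impl C (x :: xs) y (suffixLevenshtein C (x :: xs) ys)).1[0]'(impl _ _ _ _).2 = _
  simp only [impl_cons_val C x xs y h]
  rfl

end

section
variable {α β δ : Type*} [AddZeroClass δ] [LinearOrder δ] (C : Cost α β δ)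

theorem levenshtein_cons_left_le (x : α) (xs : List α) (ys : List β) :
    levenshtein C (x :: xs) ys ≤ C.delete x + levenshtein C xs ys := by
  cases ys with
  | nil => exact (levenshtein_cons_nil C x xs).le
  | cons y ys => exact (levenshtein_cons_cons C x xs y ys).trans_le (min_le_left _ _)

theorem levenshtein_cons_right_le (xs : List α) (y : β) (ys : List β) :
    levenshtein C xs (y :: ys) ≤ C.insert y + levenshtein C xs ys := by
  cases xs with
  | nil => exact (levenshtein_nil_cons C y ys).le
  | cons x xs =>
    exact (levenshtein_cons_cons C x xs y ys).trans_le ((min_le_right _ _).trans (min_le_left _ _))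

theorem levenshtein_cons_cons_le (x : α) (xs : List α) (y : β) (ys : List β) :
    levenshtein C (x :: xs) (y :: ys) ≤ C.substitute x y + levenshtein C xs ys :=
  (levenshtein_cons_cons C x xs y ys).trans_le ((min_le_right _ _).trans (min_le_right _ _))

end

theorem levenshtein_nil_append {α β δ : Type*} [AddMonoid δ] [Min δ] (C : Cost α β δ)
    (ys zs : List β) :
    levenshtein C ([] : List α) (ys ++ zs) =
      levenshtein C ([] : List α) ys + levenshtein C ([] : List α) zs := by
  induction ys with
  | nil => simp
  | cons y ys ih => simp [ih, add_assoc]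

theorem exists_append_add_levenshtein_le {α β δ : Type*} [AddCommMonoid δ] [LinearOrder δ]
    [IsOrderedAddMonoid δ] (C : Cost α β δ) :
    ∀ (xs : List α) (ys₁ ys₂ : List β), ∃ xs₁ xs₂, xs = xs₁ ++ xs₂ ∧
      levenshtein C xs₁ ys₁ + levenshtein C xs₂ ys₂ ≤ levenshtein C xs (ys₁ ++ ys₂)
  | xs, [], ys₂ => ⟨[], xs, rfl, by simp⟩
  | [], y :: ys₁, ys₂ => ⟨[], [], rfl, (levenshtein_nil_append C _ _).ge⟩
  | x :: xs, y :: ys₁, ys₂ => by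
    have hdel : ∃ xs₁ xs₂, x :: xs = xs₁ ++ xs₂ ∧ levenshtein C xs₁ (y :: ys₁) +
        levenshtein C xs₂ ys₂ ≤ C.delete x + levenshtein C xs (y :: ys₁ ++ ys₂) := by
      obtain ⟨xs₁, xs₂, rfl, h⟩ := exists_append_add_levenshtein_le C xs (y :: ys₁) ys₂
      refine ⟨x :: xs₁, xs₂, rfl, ?_⟩
      grw [levenshtein_cons_left_le, add_assoc, h]
    have hins : ∃ xs₁ xs₂, x :: xs = xs₁ ++ xs₂ ∧ levenshtein C xs₁ (y :: ys₁) +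
        levenshtein C xs₂ ys₂ ≤ C.insert y + levenshtein C (x :: xs) (ys₁ ++ ys₂) := by
      obtain ⟨xs₁, xs₂, hxs, h⟩ := exists_append_add_levenshtein_le C (x :: xs) ys₁ ys₂
      refine ⟨xs₁, xs₂, hxs, ?_⟩
      grw [levenshtein_cons_right_le, add_assoc, h]
    have hsub : ∃ xs₁ xs₂, x :: xs = xs₁ ++ xs₂ ∧ levenshtein C xs₁ (y :: ys₁) +
        levenshtein C xs₂ ys₂ ≤ C.substitute x y + levenshtein C xs (ys₁ ++ ys₂) := by
      obtain ⟨xs₁, xs₂, rfl, h⟩ := exists_append_add_levenshtein_le C xs ys₁ ys₂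
      refine ⟨x :: xs₁, xs₂, rfl, ?_⟩
      grw [levenshtein_cons_cons_le, add_assoc, h]
    rw [List.cons_append, levenshtein_cons_cons]
    rcases min_choice (C.delete x + _) (min _ _) with h | h <;> rw [h]
    · exact hdel
    rcases min_choice (C.insert y + _) _ with h | h <;> rw [h]
    exacts [hins, hsub]

theorem eq_of_LD_eq_zero {α : Type*} [DecidableEq α] : ∀ {xs ys : List α}, LD xs ys = 0 → xs = ys
  | [], [], _ => rfl
  | [], _ :: _, h => by simp [LD, defaultCost] at h
  | _ :: _, [], h => by simp [LD, defaultCost] at h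
  | x :: xs, y :: ys, h => by
    obtain ⟨rfl, htail⟩ : x = y ∧ LD xs ys = 0 := by
      simpa [LD, levenshtein_cons_cons, defaultCost] using h
    exact congrArg (x :: ·) (eq_of_LD_eq_zero htail)

theorem exists_mem_infix_of_LD_flatten_lt_length {α : Type*} [DecidableEq α] (x : List α) :
    ∀ segs : List (List α), LD x segs.flatten < segs.length → ∃ s ∈ segs, s <:+: x
  | [], h => absurd h (Nat.not_lt_zero _)
  | s :: segs, h => by
    obtain ⟨x₁, x₂, rfl, hle⟩ := exists_append_add_levenshtein_le defaultCost x s segs.flatten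
    rw [List.flatten_cons, List.length_cons] at h
    by_cases hs : LD x₁ s = 0
    · exact ⟨s, List.mem_cons_self, eq_of_LD_eq_zero hs ▸ List.infix_append [] x₁ x₂⟩
    · obtain ⟨t, ht, htx⟩ :=
        exists_mem_infix_of_LD_flatten_lt_length x₂ segs (by unfold LD at *; omega)
      exact ⟨t, List.mem_cons_of_mem s ht, htx.trans (List.suffix_append x₁ x₂).isInfix⟩

theorem partition_lemma (x y : List α) (U : ℕ) (h : LD x y ≤ U)
    (segs : List (List α)) (hlen : segs.length = U + 1) (hjoin : segs.flatten = y) :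
    ∃ s ∈ segs, s <:+: x := by
  subst hjoin
  exact exists_mem_infix_of_LD_flatten_lt_length x segs (by omega)
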